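/- arXiv:1109.4224 — 5 statements merged into one kernel-verified Lean document; each statement's English description precedes it below -/
import Mathlib

section
/- Let A be an n×n complex upper triangular matrix with constant diagonal entry α and superdiagonal entries α_{i,i+1}. If there exists an invertible matrix X such that A·X = X·J, where J is the n×n Jordan block with eigenvalue α (i.e., J has α on the diagonal, 1 on the superdiagonal, and 0 elsewhere), then every superdiagonal entry α_{i,i+1} of A is nonzero. -/
private lemma pow_lt_zero {n : ℕ} (N : Matrix (Fin n) (Fin n) ℂ)
    (h : ∀ i j : Fin n, (j : ℕ) ≤ (i : ℕ) → N i j = 0) :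
    ∀ (m : ℕ) (i j : Fin n), (j : ℕ) < (i : ℕ) + m → (N ^ m) i j = 0 := by
  intro m
  induction m with
  | zero =>
    intro i j hij
    rw [pow_zero, Matrix.one_apply_ne]
    intro e; rw [e] at hij; omega
  | succ m ih =>
    intro i j hij
    rw [pow_succ', Matrix.mul_apply]
    apply Finset.sum_eq_zero
    intro k _
    by_cases hk : (k : ℕ) ≤ (i : ℕ)
    · rw [h i k hk, zero_mul]
    · rw [ih k j (by omega), mul_zero]

private lemma pow_zero_of_superdiag_zero {n : ℕ} (N : Matrix (Fin n) (Fin n) ℂ)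
    (h : ∀ i j : Fin n, (j : ℕ) ≤ (i : ℕ) → N i j = 0)
    (k : Fin n) (hk1 : (k : ℕ) + 1 < n)
    (hkz : N k ⟨(k : ℕ) + 1, hk1⟩ = 0) :
    ∀ (m : ℕ) (i j : Fin n), (j : ℕ) = (i : ℕ) + m → (i : ℕ) ≤ (k : ℕ) →
      (k : ℕ) < (j : ℕ) → (N ^ m) i j = 0 := by
  intro m
  induction m with
  | zero => intro i j h1 h2 h3; omega
  | succ m ih =>
    intro i j h1 h2 h3
    rw [pow_succ', Matrix.mul_apply]
    apply Finset.sum_eq_zero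
    intro t _
    by_cases ht : (t : ℕ) ≤ (i : ℕ)
    · rw [h i t ht, zero_mul]
    · by_cases ht2 : (t : ℕ) = (i : ℕ) + 1
      · by_cases hik : (i : ℕ) = (k : ℕ)
        · have hz : N i t = 0 := by
            have hi : i = k := Fin.ext hik
            have htk : t = ⟨(k : ℕ) + 1, hk1⟩ := Fin.ext (by simp [ht2, hik])
            rw [hi, htk]; exact hkz
          rw [hz, zero_mul]
        · rw [ih t j (by omega) (by omega) h3, mul_zero]
      · rw [pow_lt_zero N h m t j (by omega), mul_zero]

private lemma jordan_pow {n : ℕ} (M : Matrix (Fin n) (Fin n) ℂ)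
    (hM : ∀ i j : Fin n, M i j = if (j : ℕ) = (i : ℕ) + 1 then 1 else 0) :
    ∀ (m : ℕ) (i j : Fin n), (j : ℕ) = (i : ℕ) + m → (M ^ m) i j = 1 := by
  intro m
  induction m with
  | zero =>
    intro i j h1
    have hij : i = j := Fin.ext (by omega)
    rw [pow_zero, hij, Matrix.one_apply_eq]
  | succ m ih =>
    intro i j h1
    have hi1 : (i : ℕ) + 1 < n := by omega
    rw [pow_succ', Matrix.mul_apply,
      Finset.sum_eq_single (⟨(i : ℕ) + 1, hi1⟩ : Fin n)]
    · rw [hM, ih ⟨(i : ℕ) + 1, hi1⟩ j (by simp; omega)]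
      simp
    · intro t _ ht
      rw [hM]
      have hne : ¬ ((t : ℕ) = (i : ℕ) + 1) := by
        intro e; exact ht (Fin.ext (by simp [e]))
      rw [if_neg hne, zero_mul]
    · intro habs; exact absurd (Finset.mem_univ _) habs

/-- If an upper triangular matrix `A` with constant diagonal `α` satisfies `A * X = X * J`
for an invertible `X`, where `J` is the Jordan block with eigenvalue `α`, then every
superdiagonal entry of `A` is nonzero. -/
theorem stmt0 (n : ℕ) (α : ℂ) (A J X : Matrix (Fin n) (Fin n) ℂ)
    (hdiag : ∀ i : Fin n, A i i = α)
    (hlow : ∀ i j : Fin n, j < i → A i j = 0)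
    (hJ : ∀ i j : Fin n, J i j =
      if i = j then α else if (j : ℕ) = (i : ℕ) + 1 then 1 else 0)
    (hX : IsUnit X)
    (hAX : A * X = X * J) :
    ∀ i j : Fin n, (j : ℕ) = (i : ℕ) + 1 → A i j ≠ 0 := by
  intro i j hij hzero
  have hn : (i : ℕ) + 1 < n := by have := j.isLt; omega
  set N : Matrix (Fin n) (Fin n) ℂ := A - α • 1 with hNdef
  set M : Matrix (Fin n) (Fin n) ℂ := J - α • 1 with hMdef
  have hN : ∀ a b : Fin n, (b : ℕ) ≤ (a : ℕ) → N a b = 0 := by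
    intro a b hab
    rcases lt_or_eq_of_le hab with h' | h'
    · have hba : b < a := by rwa [Fin.lt_def]
      have hne : a ≠ b := by intro e; rw [e] at h'; omega
      simp [hNdef, Matrix.sub_apply, Matrix.one_apply_ne hne, hlow a b hba]
    · have e : b = a := Fin.ext h'
      subst e
      simp [hNdef, Matrix.sub_apply, hdiag]
  have hMe : ∀ a b : Fin n, M a b = if (b : ℕ) = (a : ℕ) + 1 then 1 else 0 := by
    intro a b
    rcases eq_or_ne a b with rfl | hab
    · have : ¬ ((a : ℕ) = (a : ℕ) + 1) := by omega
      simp [hMdef, Matrix.sub_apply, hJ, this]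
    · simp [hMdef, Matrix.sub_apply, hJ, hab, Matrix.one_apply_ne hab]
  have hNX : N * X = X * M := by
    rw [hNdef, hMdef, Matrix.sub_mul, Matrix.mul_sub, hAX, Matrix.smul_mul,
      Matrix.mul_smul, Matrix.one_mul, Matrix.mul_one]
  have hpow : ∀ m : ℕ, N ^ m * X = X * M ^ m := by
    intro m
    induction m with
    | zero => simp
    | succ m ihm =>
      rw [pow_succ, pow_succ, Matrix.mul_assoc, hNX, ← Matrix.mul_assoc, ihm,
        Matrix.mul_assoc]
  have hj' : j = ⟨(i : ℕ) + 1, hn⟩ := Fin.ext hij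
  have hkz : N i ⟨(i : ℕ) + 1, hn⟩ = 0 := by
    have hne : i ≠ j := by intro e; rw [e] at hij; omega
    rw [← hj']
    simp [hNdef, Matrix.sub_apply, Matrix.one_apply_ne hne, hzero]
  have hNzero : N ^ (n - 1) = 0 := by
    ext a b
    rw [Matrix.zero_apply]
    by_cases hab : (b : ℕ) < (a : ℕ) + (n - 1)
    · exact pow_lt_zero N hN (n - 1) a b hab
    · have hb := b.isLt
      have ha := a.isLt
      exact pow_zero_of_superdiag_zero N hN i hn hkz (n - 1) a b (by omega)
        (by omega) (by omega)
  have hXM : X * M ^ (n - 1) = 0 := by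
    rw [← hpow (n - 1), hNzero, Matrix.zero_mul]
  obtain ⟨u, hu⟩ := hX
  have hM0 : M ^ (n - 1) = 0 := by
    rw [← hu] at hXM
    have h2 := congrArg (fun Y => (↑u⁻¹ : Matrix (Fin n) (Fin n) ℂ) * Y) hXM
    simp only [← Matrix.mul_assoc, Units.inv_mul, Matrix.one_mul,
      Matrix.mul_zero] at h2
    exact h2
  have hone : (M ^ (n - 1)) ⟨0, by omega⟩ ⟨n - 1, by omega⟩ = 1 :=
    jordan_pow M hMe (n - 1) ⟨0, by omega⟩ ⟨n - 1, by omega⟩ (by simp)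
  rw [hM0, Matrix.zero_apply] at hone
  exact one_ne_zero hone.symm
end

section
/- Let A be an n×n complex upper triangular matrix with constant diagonal α such that every superdiagonal entry A_{i,i+1} is nonzero. Then every matrix X commuting with A is upper triangular with constant diagonal, i.e., X_{ij} = 0 for i > j and X_{11} = X_{22} = ... = X_{nn}. -/
/-- If `A` is upper triangular with constant diagonal and nonzero superdiagonal entries,
then every matrix commuting with `A` is upper triangular with constant diagonal. -/
theorem stmt1 (n : ℕ) (α : ℂ) (A X : Matrix (Fin n) (Fin n) ℂ)
    (hdiag : ∀ i : Fin n, A i i = α)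
    (hlow : ∀ i j : Fin n, j < i → A i j = 0)
    (hsup : ∀ i j : Fin n, (j : ℕ) = (i : ℕ) + 1 → A i j ≠ 0)
    (hcomm : A * X = X * A) :
    (∀ i j : Fin n, j < i → X i j = 0) ∧ (∀ i j : Fin n, X i i = X j j) := by
  have hc : ∀ i j : Fin n, ∑ k, A i k * X k j = ∑ k, X i k * A k j := by
    intro i j
    simpa [Matrix.mul_apply] using congrFun (congrFun hcomm i) j
  have P : ∀ e : ℕ, ∀ a b : Fin n, b < a → n - ((a : ℕ) - (b : ℕ)) < e → X a b = 0 := by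
    intro e
    induction e with
    | zero => intro a b _ h; omega
    | succ e ihe =>
      intro a b hba hlt
      rcases Nat.lt_or_ge (n - ((a : ℕ) - b)) e with h | h
      · exact ihe a b hba h
      · have he0 : n - ((a : ℕ) - b) = e := by omega
        have Q : ∀ bq : ℕ, ∀ a b : Fin n, b < a → n - ((a : ℕ) - b) = e →
            (b : ℕ) < bq → X a b = 0 := by
          intro bq
          induction bq with
          | zero => intro a b _ _ h; omega
          | succ bq ihq =>
            intro a b hba he hb
            have hba' : (b : ℕ) < a := hba
            have han : (a : ℕ) < n := a.isLt
            have hbn : (b : ℕ) < n := b.isLt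
            have hen : 1 ≤ e := by omega
            set p' : Fin n := ⟨(a : ℕ) - 1, by omega⟩ with hp'
            have hsum := hc p' b
            have hL : ∑ k, A p' k * X k b = A p' p' * X p' b + A p' a * X a b := by
              apply Finset.sum_eq_add_of_mem p' a (Finset.mem_univ _) (Finset.mem_univ _)
              · intro hpa
                have : (p' : ℕ) = a := congrArg Fin.val hpa
                simp only [hp'] at this; omega
              · rintro c - ⟨hcp, hca⟩
                have hcp' : (c : ℕ) ≠ (a : ℕ) - 1 := fun h => hcp (Fin.ext h)
                have hca' : (c : ℕ) ≠ (a : ℕ) := fun h => hca (Fin.ext h)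
                rcases Nat.lt_or_ge (c : ℕ) ((a : ℕ) - 1) with hlt' | hge
                · rw [hlow p' c (by simpa [hp', Fin.lt_def] using hlt'), zero_mul]
                · have hgt : (a : ℕ) < c := by omega
                  rw [ihe c b (Fin.lt_def.mpr (by omega))
                    (by have := c.isLt; omega), mul_zero]
            have hR : ∑ k, X p' k * A k b = X p' b * A b b := by
              refine Finset.sum_eq_single_of_mem b (Finset.mem_univ _) ?_
              rintro c - hcb
              have hcb' : (c : ℕ) ≠ (b : ℕ) := fun h => hcb (Fin.ext h)
              rcases Nat.lt_or_ge (b : ℕ) (c : ℕ) with hgt | hge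
              · rw [hlow c b (Fin.lt_def.mpr hgt), mul_zero]
              · have hclt : (c : ℕ) < b := by omega
                have hcp : (c : ℕ) < (p' : ℕ) := by simp only [hp']; omega
                rcases Nat.lt_or_ge (n - ((p' : ℕ) - (c : ℕ))) e with h1 | h1
                · rw [ihe p' c (Fin.lt_def.mpr hcp) h1, zero_mul]
                · have hpv : (p' : ℕ) = (a : ℕ) - 1 := rfl
                  have hc1 : (c : ℕ) = (b : ℕ) - 1 := by omega
                  rw [ihq p' c (Fin.lt_def.mpr hcp) (by omega) (by omega), zero_mul]
            rw [hL, hR, hdiag, hdiag] at hsum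
            have hz : A p' a * X a b = 0 := by linear_combination hsum
            rcases mul_eq_zero.mp hz with h' | h'
            · exact absurd h' (hsup p' a (by simp only [hp']; omega))
            · exact h'
        exact Q ((b : ℕ) + 1) a b hba he0 (Nat.lt_succ_self _)
  have low : ∀ a b : Fin n, b < a → X a b = 0 := fun a b h =>
    P (n + 1) a b h (by omega)
  refine ⟨low, ?_⟩
  have step : ∀ i j : Fin n, (j : ℕ) = (i : ℕ) + 1 → X j j = X i i := by
    intro i j hj
    have hij : (i : ℕ) < j := by omega
    have hijne : i ≠ j := fun h => by rw [h] at hij; omega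
    have hsum := hc i j
    have hL : ∑ k, A i k * X k j = A i i * X i j + A i j * X j j := by
      apply Finset.sum_eq_add_of_mem i j (Finset.mem_univ _) (Finset.mem_univ _) hijne
      rintro c - ⟨hci, hcj⟩
      have hci' : (c : ℕ) ≠ (i : ℕ) := fun h => hci (Fin.ext h)
      have hcj' : (c : ℕ) ≠ (j : ℕ) := fun h => hcj (Fin.ext h)
      rcases Nat.lt_or_ge (c : ℕ) (i : ℕ) with h' | h'
      · rw [hlow i c (Fin.lt_def.mpr h'), zero_mul]
      · rw [low c j (Fin.lt_def.mpr (by omega)), mul_zero]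
    have hR : ∑ k, X i k * A k j = X i i * A i j + X i j * A j j := by
      apply Finset.sum_eq_add_of_mem i j (Finset.mem_univ _) (Finset.mem_univ _) hijne
      rintro c - ⟨hci, hcj⟩
      have hci' : (c : ℕ) ≠ (i : ℕ) := fun h => hci (Fin.ext h)
      have hcj' : (c : ℕ) ≠ (j : ℕ) := fun h => hcj (Fin.ext h)
      rcases Nat.lt_or_ge (c : ℕ) (j : ℕ) with h' | h'
      · rw [low i c (Fin.lt_def.mpr (by omega)), zero_mul]
      · rw [hlow c j (Fin.lt_def.mpr (by omega)), mul_zero]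
    rw [hL, hR, hdiag, hdiag] at hsum
    have hz : A i j * (X j j - X i i) = 0 := by linear_combination hsum
    rcases mul_eq_zero.mp hz with h' | h'
    · exact absurd h' (hsup i j hj)
    · exact sub_eq_zero.mp h'
  have base : ∀ k : ℕ, ∀ hk : k < n, ∀ h0 : 0 < n, X ⟨k, hk⟩ ⟨k, hk⟩ = X ⟨0, h0⟩ ⟨0, h0⟩ := by
    intro k
    induction k with
    | zero => intro hk h0; rfl
    | succ k ih =>
      intro hk h0
      have hk' : k < n := by omega
      rw [step ⟨k, hk'⟩ ⟨k + 1, hk⟩ rfl, ih hk' h0]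
  intro i j
  have h0 : 0 < n := i.pos
  calc X i i = X ⟨0, h0⟩ ⟨0, h0⟩ := by
        have := base (i : ℕ) i.isLt h0; simpa using this
    _ = X j j := by
        have := base (j : ℕ) j.isLt h0; simpa using this.symm
end

section
/- Let A be an n×n complex upper triangular matrix with constant diagonal α and all superdiagonal entries A_{i,i+1} nonzero. Then the only idempotent matrices commuting with A are 0 and the identity matrix I. (That is, A is strongly irreducible.) -/
/-- Two-term evaluation of a finite sum. -/
lemma sum_two_aux {n : ℕ} {f : Fin n → ℂ} {a b : Fin n} (hab : a ≠ b)
    (h : ∀ k, k ≠ a → k ≠ b → f k = 0) : ∑ k, f k = f a + f b := by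
  have h1 : ∑ k, f k = ∑ k ∈ ({a, b} : Finset (Fin n)), f k := by
    symm
    apply Finset.sum_subset (Finset.subset_univ _)
    intro k _ hk
    simp only [Finset.mem_insert, Finset.mem_singleton, not_or] at hk
    exact h k hk.1 hk.2
  rw [h1, Finset.sum_pair hab]

/-- Measure comparison lemma for the diagonal-by-diagonal induction. -/
lemma meas_lt_aux {n d d' j j' : ℕ} (hj' : j' < n) (hd : d < n)
    (h : d < d' ∨ (d = d' ∧ j' < j)) : (n - d') * n + j' < (n - d) * n + j := by
  rcases h with h | ⟨rfl, h⟩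
  · have h1 : n - d' ≤ n - d - 1 := by omega
    have h2 : (n - d') * n ≤ (n - d - 1) * n := Nat.mul_le_mul_right _ h1
    have h3 : (n - d - 1) * n + n = (n - d) * n := by
      have h4 : n - d - 1 + 1 = n - d := by omega
      calc (n - d - 1) * n + n = (n - d - 1 + 1) * n := by ring
        _ = (n - d) * n := by rw [h4]
    omega
  · omega

/-- A strictly upper triangular idempotent matrix is zero. -/
lemma idem_zero_aux {n : ℕ} (Q : Matrix (Fin n) (Fin n) ℂ) (h : Q * Q = Q)
    (hl : ∀ i j : Fin n, (j : ℕ) ≤ (i : ℕ) → Q i j = 0) : Q = 0 := by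
  have key : ∀ m : ℕ, ∀ i j : Fin n, (j : ℕ) ≤ (i : ℕ) + m → Q i j = 0 := by
    intro m
    induction m with
    | zero => intro i j hj; exact hl i j (by omega)
    | succ m ih =>
      intro i j hj
      have : Q i j = (Q * Q) i j := by rw [h]
      rw [this, Matrix.mul_apply]
      apply Finset.sum_eq_zero
      intro k _
      by_cases hk : (k : ℕ) ≤ (i : ℕ) + m
      · rw [ih i k hk, zero_mul]
      · rw [ih k j (by omega), mul_zero]
  ext i j
  simpa using key n i j (by omega)

/-- An upper triangular matrix with constant diagonal and nonzero superdiagonal entries is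
strongly irreducible: the only idempotents in its commutant are `0` and `1`. -/
theorem stmt2 (n : ℕ) (α : ℂ) (A : Matrix (Fin n) (Fin n) ℂ)
    (hdiag : ∀ i : Fin n, A i i = α)
    (hlow : ∀ i j : Fin n, j < i → A i j = 0)
    (hsup : ∀ i j : Fin n, (j : ℕ) = (i : ℕ) + 1 → A i j ≠ 0) :
    ∀ P : Matrix (Fin n) (Fin n) ℂ, P * P = P → A * P = P * A → P = 0 ∨ P = 1 := by
  intro P hP hAP
  rcases Nat.eq_zero_or_pos n with hn | hn
  · left; ext i j; exact absurd i.isLt (by omega)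
  have hc : ∀ a b : Fin n, ∑ k, A a k * P k b = ∑ k, P a k * A k b := by
    intro a b
    have h1 := congrFun (congrFun hAP a) b
    simpa [Matrix.mul_apply] using h1
  -- P is strictly lower-triangular-zero
  have lowerm : ∀ m : ℕ, ∀ i j : Fin n, (j : ℕ) < (i : ℕ) →
      (n - ((i : ℕ) - (j : ℕ))) * n + (j : ℕ) < m → P i j = 0 := by
    intro m
    induction m with
    | zero => intro i j _ h; omega
    | succ m ih =>
      intro i j hij hm
      have hi1 : (i : ℕ) - 1 < n := by omega
      set i' : Fin n := ⟨(i : ℕ) - 1, hi1⟩ with hi'def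
      have hvi' : (i' : ℕ) = (i : ℕ) - 1 := rfl
      have hii' : i' ≠ i := by
        intro hcon
        have := congrArg (Fin.val) hcon
        omega
      have hdn : (i : ℕ) - (j : ℕ) < n := by omega
      -- LHS sum
      have hL : ∑ k, A i' k * P k j = α * P i' j + A i' i * P i j := by
        rw [sum_two_aux hii' ?_, hdiag i']
        intro k hk1 hk2
        rcases lt_trichotomy (k : ℕ) ((i' : ℕ)) with hlt | heq | hgt
        · rw [hlow i' k (by exact hlt), zero_mul]
        · exact absurd (Fin.ext heq) hk1
        · have hk3 : (i : ℕ) < (k : ℕ) := by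
            rcases Nat.lt_or_ge (i : ℕ) (k : ℕ) with h | h
            · exact h
            · exfalso; apply hk2; apply Fin.ext; omega
          have : P k j = 0 := by
            apply ih k j (by omega)
            have := meas_lt_aux (n := n) (d := (i : ℕ) - (j : ℕ))
              (d' := (k : ℕ) - (j : ℕ)) (j := (j : ℕ)) (j' := (j : ℕ))
              j.isLt hdn (Or.inl (by omega))
            omega
          rw [this, mul_zero]
      -- RHS sum
      have hR : ∑ k, P i' k * A k j = P i' j * α := by
        rw [Finset.sum_eq_single j]
        · rw [hdiag j]
        · intro k _ hk
          rcases lt_trichotomy (k : ℕ) ((j : ℕ)) with hlt | heq | hgt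
          · have : P i' k = 0 := by
              apply ih i' k (by omega)
              have := meas_lt_aux (n := n) (d := (i : ℕ) - (j : ℕ))
                (d' := (i' : ℕ) - (k : ℕ)) (j := (j : ℕ)) (j' := (k : ℕ))
                k.isLt hdn (by omega)
              omega
            rw [this, zero_mul]
          · exact absurd (Fin.ext heq) hk
          · rw [hlow k j (by exact hgt), mul_zero]
        · intro h; exact absurd (Finset.mem_univ j) h
      have heq := hc i' j
      rw [hL, hR] at heq
      have hA : A i' i ≠ 0 := hsup i' i (by omega)
      have : A i' i * P i j = 0 := by linear_combination heq
      rcases mul_eq_zero.mp this with h | h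
      · exact absurd h hA
      · exact h
  have lower : ∀ i j : Fin n, (j : ℕ) < (i : ℕ) → P i j = 0 := fun i j hij =>
    lowerm ((n - ((i : ℕ) - (j : ℕ))) * n + (j : ℕ) + 1) i j hij (Nat.lt_succ_self _)
  -- constant diagonal
  have diagstep : ∀ i j : Fin n, (j : ℕ) = (i : ℕ) + 1 → P j j = P i i := by
    intro i j hij
    have hij' : i ≠ j := by intro h; rw [h] at hij; omega
    have hji' : j ≠ i := fun h => hij' h.symm
    have hL : ∑ k, A i k * P k j = α * P i j + A i j * P j j := by
      rw [sum_two_aux hij' ?_, hdiag i]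
      intro k hk1 hk2
      rcases lt_trichotomy (k : ℕ) ((i : ℕ)) with hlt | heq | hgt
      · rw [hlow i k (by exact hlt), zero_mul]
      · exact absurd (Fin.ext heq) hk1
      · have hk3 : (j : ℕ) < (k : ℕ) := by
          rcases Nat.lt_or_ge (j : ℕ) (k : ℕ) with h | h
          · exact h
          · exfalso; apply hk2; apply Fin.ext; omega
        rw [lower k j hk3, mul_zero]
    have hR : ∑ k, P i k * A k j = P i i * A i j + P i j * α := by
      rw [sum_two_aux hij' ?_, hdiag j]
      intro k hk1 hk2
      rcases lt_trichotomy (k : ℕ) ((i : ℕ)) with hlt | heq | hgt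
      · rw [lower i k (by exact hlt), zero_mul]
      · exact absurd (Fin.ext heq) hk1
      · have hk3 : (j : ℕ) < (k : ℕ) := by
          rcases Nat.lt_or_ge (j : ℕ) (k : ℕ) with h | h
          · exact h
          · exfalso; apply hk2; apply Fin.ext; omega
        rw [hlow k j (by exact hk3), mul_zero]
    have heq := hc i j
    rw [hL, hR] at heq
    have hA : A i j ≠ 0 := hsup i j hij
    have h0 : A i j * (P j j - P i i) = 0 := by linear_combination heq
    rcases mul_eq_zero.mp h0 with h | h
    · exact absurd h hA
    · linear_combination h
  set i0 : Fin n := ⟨0, hn⟩ with hi0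
  have diagconst : ∀ i : Fin n, P i i = P i0 i0 := by
    have key : ∀ v : ℕ, ∀ h : v < n, P ⟨v, h⟩ ⟨v, h⟩ = P i0 i0 := by
      intro v
      induction v with
      | zero => intro h; rfl
      | succ v ihv =>
        intro h
        have hv : v < n := by omega
        rw [diagstep ⟨v, hv⟩ ⟨v + 1, h⟩ rfl]
        exact ihv hv
    intro i
    have : i = ⟨(i : ℕ), i.isLt⟩ := by apply Fin.ext; rfl
    rw [this]; exact key _ _
  -- diagonal value is idempotent
  have hdval : P i0 i0 * P i0 i0 = P i0 i0 := by
    have h1 : (P * P) i0 i0 = P i0 i0 := by rw [hP]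
    rw [Matrix.mul_apply] at h1
    rw [Finset.sum_eq_single i0] at h1
    · exact h1
    · intro k _ hk
      have hk0 : (0 : ℕ) < (k : ℕ) := by
        rcases Nat.eq_zero_or_pos (k : ℕ) with h | h
        · exact absurd (Fin.ext (by simpa using h)) hk
        · exact h
      rw [lower k i0 hk0, mul_zero]
    · intro h; exact absurd (Finset.mem_univ i0) h
  have hcases : P i0 i0 = 0 ∨ P i0 i0 = 1 := by
    rcases mul_eq_zero.mp (by linear_combination hdval : P i0 i0 * (P i0 i0 - 1) = 0) with h | h
    · exact Or.inl h
    · exact Or.inr (by linear_combination h)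
  rcases hcases with h0 | h1
  · left
    apply idem_zero_aux P hP
    intro i j hji
    rcases Nat.lt_or_ge (j : ℕ) (i : ℕ) with h | h
    · exact lower i j h
    · have : j = i := Fin.ext (by omega)
      rw [this, diagconst i, h0]
  · right
    have hQ : (1 - P) * (1 - P) = 1 - P := by
      rw [sub_mul, one_mul, mul_sub, mul_one, hP]
      abel
    have hQ0 : (1 - P) = 0 := by
      apply idem_zero_aux _ hQ
      intro i j hji
      rcases Nat.lt_or_ge (j : ℕ) (i : ℕ) with h | h
      · have hij : i ≠ j := by intro hcon; rw [hcon] at h; omega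
        simp [Matrix.sub_apply, Matrix.one_apply_ne hij, lower i j h]
      · have hji2 : j = i := Fin.ext (by omega)
        rw [hji2]
        simp [Matrix.sub_apply, Matrix.one_apply_eq, diagconst i, h1]
    have := sub_eq_zero.mp hQ0
    ext i j
    rw [← this]
end

section
/- Let A be an n×n complex upper triangular matrix with constant diagonal α such that some superdiagonal entry A_{k,k+1} equals 0 (for some 1 ≤ k ≤ n-1), with n ≥ 2. Then there exists an idempotent P commuting with A with P ≠ 0 and P ≠ I. (That is, A is not strongly irreducible.) -/
/-!
Write `A = α • 1 + N` with `N` strictly upper triangular. Give the indices the weight that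
merges the levels `k` and `k + 1` into one; because `N k (k + 1) = 0`, every nonzero entry of `N`
strictly raises the weight, which takes only `n - 1` values, so `N ^ (n - 1) = 0`. If `N` has
nilpotency index `m + 1 ≤ n - 1`, pick `v` with `N ^ m *ᵥ v ≠ 0`. The vectors `N ^ s *ᵥ v`,
`s ≤ m`, are independent, so some `u` has `u ⬝ᵥ N ^ s *ᵥ v = δ s m`, and then
`P = ∑_{s + t = m} N ^ s * vecMulVec v u * N ^ t` is the projection onto the cyclic subspace they
span along an `N`-invariant complement: an idempotent commuting with `N` of trace `m + 1`, which
is neither `0` nor `n`.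
-/

open Matrix Finset

section CyclicProjection

variable {R : Type*} [Semiring R]

def cyclicProjection (a e : R) (m : ℕ) : R :=
  ∑ p ∈ antidiagonal m, a ^ p.1 * e * a ^ p.2

theorem commute_cyclicProjection {a : R} (e : R) {m : ℕ} (ha : a ^ (m + 1) = 0) :
    Commute a (cyclicProjection a e m) := by
  have hleft :
      ∑ p ∈ antidiagonal (m + 1), a ^ p.1 * e * a ^ p.2 = a * cyclicProjection a e m := by
    simp only [Nat.sum_antidiagonal_succ, ha, mul_zero, zero_add, cyclicProjection, mul_sum,
      pow_succ', mul_assoc]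
  have hright :
      ∑ p ∈ antidiagonal (m + 1), a ^ p.1 * e * a ^ p.2 = cyclicProjection a e m * a := by
    simp only [Nat.sum_antidiagonal_succ', ha, zero_mul, zero_add, cyclicProjection, sum_mul,
      pow_succ, mul_assoc]
  exact hleft.symm.trans hright

theorem isIdempotentElem_cyclicProjection {a e : R} {m : ℕ} (ha : a ^ (m + 1) = 0)
    (he : ∀ j ≤ m, e * a ^ j * e = if j = m then e else 0) :
    IsIdempotentElem (cyclicProjection a e m) := by
  have he' : ∀ j, e * a ^ j * e = if j = m then e else 0 := by
    intro j
    rcases le_or_gt j m with hj | hj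
    · exact he j hj
    · rw [pow_eq_zero_of_le hj ha, if_neg hj.ne', mul_zero, zero_mul]
  have hterm : ∀ p ∈ antidiagonal m, ∀ q ∈ antidiagonal m,
      a ^ p.1 * e * a ^ p.2 * (a ^ q.1 * e * a ^ q.2) =
        if q = p then a ^ p.1 * e * a ^ p.2 else 0 := by
    intro p hp q hq
    rw [HasAntidiagonal.mem_antidiagonal] at hp hq
    rw [show a ^ p.1 * e * a ^ p.2 * (a ^ q.1 * e * a ^ q.2) =
        a ^ p.1 * (e * a ^ (p.2 + q.1) * e) * a ^ q.2 by simp only [pow_add, mul_assoc], he']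
    by_cases hqp : q = p
    · subst hqp
      rw [if_pos (by omega), if_pos rfl]
    · rw [if_neg fun h => hqp (Prod.ext (by omega) (by omega)), if_neg hqp, mul_zero, zero_mul]
  unfold IsIdempotentElem cyclicProjection
  rw [sum_mul_sum]
  exact sum_congr rfl fun p hp => by rw [sum_congr rfl (hterm p hp), sum_ite_eq', if_pos hp]

theorem Matrix.trace_cyclicProjection {n K : Type*} [Fintype n] [DecidableEq n] [CommSemiring K]
    (N e : Matrix n n K) (m : ℕ) :
    (cyclicProjection N e m).trace = (m + 1) * (e * N ^ m).trace := by
  have hterm : ∀ p ∈ antidiagonal m, (N ^ p.1 * e * N ^ p.2).trace = (e * N ^ m).trace := by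
    intro p hp
    rw [trace_mul_comm, ← Matrix.mul_assoc, ← pow_add, trace_mul_comm, add_comm,
      HasAntidiagonal.mem_antidiagonal.mp hp]
  rw [cyclicProjection, trace_sum, sum_congr rfl hterm, sum_const, Nat.card_antidiagonal,
    nsmul_eq_mul]
  push_cast
  ring

end CyclicProjection

theorem Module.End.linearIndependent_pow_apply {K V : Type*} [Field K] [AddCommGroup V]
    [Module K V] {f : Module.End K V} {m : ℕ} {v : V} (hv : (f ^ m) v ≠ 0)
    (hv' : (f ^ (m + 1)) v = 0) :
    LinearIndependent K (fun i : Fin (m + 1) => (f ^ (i : ℕ)) v) := by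
  induction m generalizing v with
  | zero => exact (linearIndependent_unique_iff (ι := Fin 1)).mpr (by simpa using hv)
  | succ m ih =>
    rw [linearIndependent_finSucc]
    constructor
    · rw [pow_succ, Module.End.mul_apply] at hv hv'
      convert ih hv hv' using 1
      funext i
      simp only [Fin.tail, Fin.val_succ, pow_succ, Module.End.mul_apply]
    · intro hmem
      have hker : Submodule.span K (Set.range (Fin.tail fun i : Fin (m + 2) => (f ^ (i : ℕ)) v))
          ≤ LinearMap.ker (f ^ (m + 1)) := by
        rw [Submodule.span_le]
        rintro _ ⟨i, rfl⟩
        simp only [Fin.tail, Fin.val_succ, SetLike.mem_coe, LinearMap.mem_ker,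
          ← Module.End.mul_apply, ← pow_add]
        rw [show m + 1 + (i + 1) = i + (m + 1 + 1) by omega, pow_add, Module.End.mul_apply, hv',
          map_zero]
      exact hv (by simpa using hker hmem)

theorem LinearIndependent.exists_dotProduct_eq {ι n K : Type*} [Finite ι] [Fintype n] [Field K]
    {g : ι → n → K} (hg : LinearIndependent K g) (c : ι → K) :
    ∃ u : n → K, ∀ i, u ⬝ᵥ g i = c i := by
  have hc : c ∈ Submodule.span K (Set.range (flip g)) := by
    rw [span_flip_eq_top_iff_linearIndependent.mpr hg]
    trivial
  obtain ⟨u, hu⟩ := (Submodule.mem_span_range_iff_exists_fun K).mp hc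
  refine ⟨u, fun i => ?_⟩
  rw [← hu]
  simp [dotProduct, flip, Finset.sum_apply]

theorem Matrix.exists_isIdempotentElem_commute_trace_eq {n K : Type*} [Fintype n] [DecidableEq n]
    [Field K] {N : Matrix n n K} {m : ℕ} (hm : N ^ m ≠ 0) (hm' : N ^ (m + 1) = 0) :
    ∃ P : Matrix n n K, IsIdempotentElem P ∧ Commute N P ∧ P.trace = m + 1 := by
  obtain ⟨v, hv⟩ : ∃ v, N ^ m *ᵥ v ≠ 0 := by
    by_contra! h
    exact hm (mulVec_injective (funext fun v => by simpa using h v))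
  have hli : LinearIndependent K (fun i : Fin (m + 1) => N ^ (i : ℕ) *ᵥ v) := by
    have := Module.End.linearIndependent_pow_apply (f := toLin' N) (v := v) (m := m)
      (by rwa [← toLin'_pow, toLin'_apply])
      (by rw [← toLin'_pow, toLin'_apply, hm', zero_mulVec])
    simpa only [← toLin'_pow, toLin'_apply] using this
  obtain ⟨u, hu⟩ := hli.exists_dotProduct_eq (fun i => if i = Fin.last m then 1 else 0)
  have huv : ∀ j ≤ m, u ⬝ᵥ (N ^ j *ᵥ v) = if j = m then 1 else 0 := fun j hj => by
    simpa [Fin.ext_iff] using hu ⟨j, by omega⟩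
  refine ⟨cyclicProjection N (vecMulVec v u) m, isIdempotentElem_cyclicProjection hm' ?_,
    commute_cyclicProjection _ hm', ?_⟩
  · intro j hj
    rw [vecMulVec_mul, vecMulVec_mul_vecMulVec, ← dotProduct_mulVec, huv j hj]
    split_ifs <;> simp
  · rw [trace_cyclicProjection, vecMulVec_mul, trace_vecMulVec, dotProduct_comm,
      ← dotProduct_mulVec, huv m le_rfl, if_pos rfl, mul_one]

theorem Matrix.pow_apply_eq_zero_of_lt_add {ι R : Type*} [Fintype ι] [DecidableEq ι] [Semiring R]
    {N : Matrix ι ι R} (d : ι → ℕ) (hN : ∀ i j, d j ≤ d i → N i j = 0) (p : ℕ)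
    {i j : ι} (hij : d j < d i + p) : (N ^ p) i j = 0 := by
  induction p generalizing j with
  | zero => exact one_apply_ne (by rintro rfl; omega)
  | succ p ih =>
    rw [pow_succ, mul_apply]
    refine sum_eq_zero fun t _ => ?_
    rcases lt_or_ge (d t) (d i + p) with ht | ht
    · rw [ih ht, zero_mul]
    · rw [hN t j (by omega), mul_zero]

/-- If an upper triangular matrix with constant diagonal has a vanishing superdiagonal entry,
then it is not strongly irreducible: its commutant contains a nontrivial idempotent. -/
theorem stmt3 (n : ℕ) (hn : 2 ≤ n) (α : ℂ) (A : Matrix (Fin n) (Fin n) ℂ)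
    (hdiag : ∀ i : Fin n, A i i = α)
    (hlow : ∀ i j : Fin n, j < i → A i j = 0)
    (hk : ∃ k l : Fin n, (l : ℕ) = (k : ℕ) + 1 ∧ A k l = 0) :
    ∃ P : Matrix (Fin n) (Fin n) ℂ, P * P = P ∧ A * P = P * A ∧ P ≠ 0 ∧ P ≠ 1 := by
  obtain ⟨k, l, hkl, hAkl⟩ := hk
  set N := A - α • 1
  let d : Fin n → ℕ := fun i => if (i : ℕ) ≤ k then i else i - 1
  have hNd : ∀ i j, d j ≤ d i → N i j = 0 := by
    intro i j hij
    simp only [N, Matrix.sub_apply, Matrix.smul_apply, one_apply, smul_eq_mul]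
    rcases lt_trichotomy i j with h | rfl | h
    · obtain ⟨rfl, rfl⟩ : i = k ∧ j = l := by
        rw [Fin.lt_def] at h
        simp only [d] at hij
        constructor <;> ext <;> split_ifs at hij <;> omega
      simp [hAkl, h.ne]
    · simp [hdiag]
    · simp [hlow i j h, h.ne']
  have hNn : N ^ (n - 1) = 0 := by
    ext i j
    exact pow_apply_eq_zero_of_lt_add d hNd _ (by simp only [d]; split_ifs <;> omega)
  have : NeZero n := ⟨by omega⟩
  obtain ⟨m, hm⟩ : ∃ m, nilpotencyClass N = m + 1 :=
    Nat.exists_eq_add_one.mpr (pos_nilpotencyClass_iff.mpr ⟨_, hNn⟩)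
  obtain ⟨hm1, hm0⟩ := nilpotencyClass_eq_succ_iff.mp hm
  have hmn : m + 1 ≤ n - 1 := hm ▸ Nat.sInf_le hNn
  obtain ⟨P, hPP, hNP, htr⟩ := exists_isIdempotentElem_commute_trace_eq hm0 hm1
  have hAP : Commute A P := by
    simpa [N] using hNP.add_left ((Commute.one_left P).smul_left α)
  refine ⟨P, hPP, hAP.eq, ?_, ?_⟩
  · rintro rfl
    exact Nat.cast_add_one_ne_zero m (by simpa using htr.symm)
  · rintro rfl
    rw [trace_one, Fintype.card_fin] at htr
    exact (show n ≠ m + 1 by omega) (by exact_mod_cast htr)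
end

section
/- Let Q be an idempotent in M_m(ℂ) with ‖Q‖ ≤ k (operator norm). Then Q is unitarily equivalent to a block matrix of the form [[I, R], [0, 0]] with ‖R‖ ≤ k, and hence there exists an invertible matrix X with ‖X‖ ≤ 1 + k and ‖X⁻¹‖ ≤ 1 + k such that XQX⁻¹ is a self-adjoint projection. -/
/-!
Let `P` be the orthogonal projection onto the range of `Q`, so that `PQ = Q` and `QP = P`.
Diagonalising `P` by a unitary `U` puts `UPU*` in the form `[[I, 0], [0, 0]]`, and these two
relations force `UQU* = [[I, R], [0, 0]]`; `R` is a block of `UQU*`, so `‖R‖ ≤ ‖Q‖`.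

For the similarity, `S = Q - P = Q(1 - P)` satisfies `S² = 0`, `SQ = 0` and `QS = S`, so
`X = 1 + S` is invertible with inverse `1 - S` and `XQX⁻¹ = P`. Since `1 - P` is a projection,
`‖S‖ ≤ ‖Q‖`, whence `‖X‖, ‖X⁻¹‖ ≤ 1 + ‖Q‖`.
-/

open scoped Matrix.Norms.L2Operator
open Finset

def Units.oneAddOfMulSelfEqZero {R : Type*} [Ring R] (a : R) (ha : a * a = 0) : Rˣ where
  val := 1 + a
  inv := 1 - a
  val_inv := by simp [mul_sub, add_mul, ha]
  inv_val := by simp [sub_mul, mul_add, ha]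

theorem IsStarProjection.exists_unit_conj_eq_of_mul_eq {A : Type*} [NormedRing A] [StarRing A]
    [CStarRing A] {p q : A} (hp : IsStarProjection p) (hq : IsIdempotentElem q)
    (hpq : p * q = q) (hqp : q * p = p) :
    ∃ x : Aˣ, ‖(x : A)‖ ≤ 1 + ‖q‖ ∧ ‖(↑x⁻¹ : A)‖ ≤ 1 + ‖q‖ ∧ x * q * ↑x⁻¹ = p := by
  have hsq : (q - p) * (q - p) = 0 := by
    simp only [sub_mul, mul_sub, hp.isIdempotentElem.eq, hq.eq, hpq, hqp, sub_self]
  have hnorm : ‖q - p‖ ≤ ‖q‖ :=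
    calc ‖q - p‖ = ‖q * (1 - p)‖ := by rw [mul_sub, mul_one, hqp]
      _ ≤ ‖q‖ * ‖1 - p‖ := norm_mul_le _ _
      _ ≤ ‖q‖ := mul_le_of_le_one_right (norm_nonneg _) hp.one_sub.norm_le
  have hone : ‖(1 : A)‖ ≤ 1 := (IsStarProjection.one A).norm_le
  refine ⟨Units.oneAddOfMulSelfEqZero (q - p) hsq, ?_, ?_, ?_⟩
  · exact (norm_add_le _ _).trans (add_le_add hone hnorm)
  · exact (norm_sub_le _ _).trans (add_le_add hone hnorm)
  · change (1 + (q - p)) * q * (1 - (q - p)) = p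
    have hleft : (1 + (q - p)) * q = q := by
      rw [add_mul, one_mul, sub_mul, hq.eq, hpq, sub_self, add_zero]
    rw [hleft, mul_sub, mul_one, mul_sub, hq.eq, hqp, sub_sub_cancel]

section RangeProjection

variable {𝕜 : Type*} [RCLike 𝕜]

open ContinuousLinearMap in
theorem ContinuousLinearMap.IsIdempotentElem.exists_isStarProjection_mul_eq {E : Type*}
    [NormedAddCommGroup E] [InnerProductSpace 𝕜 E] [CompleteSpace E] {T : E →L[𝕜] E}
    (hT : IsIdempotentElem T) :
    ∃ P : E →L[𝕜] E, IsStarProjection P ∧ P * T = T ∧ T * P = P := by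
  have := IsIdempotentElem.hasOrthogonalProjection_range hT
  have hrange : T.range.starProjection.range = T.range := Submodule.range_starProjection _
  refine ⟨T.range.starProjection, isStarProjection_starProjection, ?_, ?_⟩
  · refine coe_injective ((LinearMap.IsIdempotentElem.comp_eq_right_iff ?_ _).mpr hrange.ge)
    exact IsIdempotentElem.toLinearMap T.range.isIdempotentElem_starProjection
  · exact coe_injective ((LinearMap.IsIdempotentElem.comp_eq_right_iff
      (IsIdempotentElem.toLinearMap hT) _).mpr hrange.le)

theorem Matrix.IsIdempotentElem.exists_isStarProjection_mul_eq {n : Type*} [Fintype n]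
    [DecidableEq n] {Q : Matrix n n 𝕜} (hQ : IsIdempotentElem Q) :
    ∃ P : Matrix n n 𝕜, IsStarProjection P ∧ P * Q = Q ∧ Q * P = P := by
  let φ := Matrix.toEuclideanCLM (n := n) (𝕜 := 𝕜)
  obtain ⟨P, hP, hPQ, hQP⟩ :=
    ContinuousLinearMap.IsIdempotentElem.exists_isStarProjection_mul_eq (hQ.map φ)
  refine ⟨φ.symm P, hP.map (A := EuclideanSpace 𝕜 n →L[𝕜] EuclideanSpace 𝕜 n) φ.symm,
    EquivLike.injective φ ?_, EquivLike.injective φ ?_⟩ <;>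
    simpa only [map_mul, φ.apply_symm_apply]

end RangeProjection

def finSumFinSubEquiv {r m : ℕ} (h : r ≤ m) : Fin r ⊕ Fin (m - r) ≃ Fin m :=
  finSumFinEquiv.trans (finCongr (Nat.add_sub_cancel' h))

namespace Matrix

section Blocks

variable {α : Type*} [Semiring α] {n p q : Type*} [Fintype p] [Fintype q] [DecidableEq p]

theorem eq_fromBlocks_of_mul_fromBlocks_one_zero (N : Matrix (p ⊕ q) (p ⊕ q) α)
    (hleft : fromBlocks 1 0 0 0 * N = N)
    (hright : N * fromBlocks 1 0 0 0 = fromBlocks 1 0 0 0) :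
    N = fromBlocks 1 N.toBlocks₁₂ 0 0 := by
  rw [← fromBlocks_toBlocks N, fromBlocks_multiply] at hleft hright
  simp only [Matrix.one_mul, Matrix.zero_mul, Matrix.mul_one, Matrix.mul_zero, add_zero,
    fromBlocks_inj] at hleft hright
  conv_lhs => rw [← fromBlocks_toBlocks N]
  rw [hright.1, ← hleft.2.2.1, ← hleft.2.2.2]

theorem eq_reindex_fromBlocks_of_mul_reindex_fromBlocks_one_zero [Fintype n] (e : p ⊕ q ≃ n)
    (N : Matrix n n α)
    (hleft : reindex e e (fromBlocks 1 0 0 0) * N = N)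
    (hright : N * reindex e e (fromBlocks 1 0 0 0) = reindex e e (fromBlocks 1 0 0 0)) :
    N = reindex e e (fromBlocks 1 (N.submatrix (e ∘ Sum.inl) (e ∘ Sum.inr)) 0 0) := by
  have hN : N = reindex e e (reindex e.symm e.symm N) := by simp
  have hmul (A B : Matrix (p ⊕ q) (p ⊕ q) α) :
      reindex e e A * reindex e e B = reindex e e (A * B) := by
    simp only [reindex_apply, submatrix_mul_equiv]
  rw [hN, hmul] at hleft hright
  calc N = reindex e e (reindex e.symm e.symm N) := hN
    _ = _ := by
      rw [eq_fromBlocks_of_mul_fromBlocks_one_zero _ ((reindex e e).injective hleft)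
        ((reindex e e).injective hright)]
      rfl

end Blocks

theorem submatrix_finSumEquivOfFinset_diagonal {α ι : Type*} [Zero α] [One α] [Fintype ι]
    [LinearOrder ι] {s : Finset ι} {r k : ℕ} (hr : #s = r) (hk : #sᶜ = k) :
    (diagonal fun i ↦ if i ∈ s then (1 : α) else 0).submatrix (finSumEquivOfFinset hr hk)
      (finSumEquivOfFinset hr hk) = fromBlocks 1 0 0 0 := by
  rw [submatrix_diagonal_equiv, ← diagonal_one, ← diagonal_zero, fromBlocks_diagonal]
  congr 1
  ext (i | i)
  · simp [orderEmbOfFin_mem]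
  · simp [mem_compl.mp (sᶜ.orderEmbOfFin_mem hk i)]

section Unitary

variable {l n : Type*} [Fintype n]

theorem submatrix_mul_mul_conjTranspose_submatrix {α : Type*} [Semiring α] [StarRing α]
    (U A : Matrix n n α) (σ : l → n) :
    U.submatrix σ id * A * (U.submatrix σ id)ᴴ = (U * A * Uᴴ).submatrix σ σ := by
  ext i j
  simp [mul_apply]

variable [DecidableEq n]

theorem submatrix_id_mem_unitaryGroup {α : Type*} [CommRing α] [StarRing α] {U : Matrix n n α}
    (hU : U ∈ unitaryGroup n α) (σ : n ≃ n) : U.submatrix σ id ∈ unitaryGroup n α := by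
  have h := submatrix_mul_mul_conjTranspose_submatrix U 1 σ
  rw [Matrix.mul_one, Matrix.mul_one, ← star_eq_conjTranspose, ← star_eq_conjTranspose,
    mem_unitaryGroup_iff.mp hU, submatrix_one_equiv] at h
  exact mem_unitaryGroup_iff.mpr h

variable {𝕜 : Type*} [RCLike 𝕜]

theorem IsStarProjection.exists_unitary_conj_eq_diagonal {P : Matrix n n 𝕜}
    (hP : IsStarProjection P) :
    ∃ V ∈ unitaryGroup n 𝕜, ∃ s : Finset n,
      V * P * star V = diagonal fun i ↦ if i ∈ s then 1 else 0 := by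
  classical
  have hH : P.IsHermitian := hP.isSelfAdjoint
  set u := star hH.eigenvectorUnitary
  set d : n → 𝕜 := RCLike.ofReal ∘ hH.eigenvalues
  have hconj : (u : Matrix n n 𝕜) * P * star (u : Matrix n n 𝕜) = diagonal d := by
    simpa [u] using hH.conjStarAlgAut_star_eigenvectorUnitary
  have hd : ∀ i, d i = 0 ∨ d i = 1 := by
    have hD : IsIdempotentElem (diagonal d) :=
      hconj ▸ (hP.map (Unitary.conjStarAlgAut 𝕜 _ u)).isIdempotentElem
    intro i
    have hi : d i * d i = d i := by simpa using congrFun (congrFun hD.eq i) i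
    exact IsIdempotentElem.iff_eq_zero_or_one.mp hi
  refine ⟨u, u.2, ({i | d i = 1} : Finset n), ?_⟩
  rw [hconj]
  congr 1
  ext i
  rcases hd i with h | h <;> simp [h]

theorem IsStarProjection.exists_unitary_conj_eq_reindex_fromBlocks {m : ℕ}
    {P : Matrix (Fin m) (Fin m) 𝕜} (hP : IsStarProjection P) :
    ∃ r, ∃ hr : r ≤ m, ∃ U ∈ unitaryGroup (Fin m) 𝕜,
      U * P * star U =
        reindex (finSumFinSubEquiv hr) (finSumFinSubEquiv hr) (fromBlocks 1 0 0 0) := by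
  obtain ⟨V, hV, s, hVP⟩ := IsStarProjection.exists_unitary_conj_eq_diagonal hP
  have hr : #s ≤ m := (card_le_univ s).trans_eq (Fintype.card_fin m)
  have hk : #sᶜ = m - #s := by rw [card_compl, Fintype.card_fin]
  -- `σ` lists the indices in `s` first, so permuting the rows of `V` sorts the diagonal.
  let σ := (finSumFinSubEquiv hr).symm.trans (finSumEquivOfFinset rfl hk)
  refine ⟨#s, hr, V.submatrix σ id, submatrix_id_mem_unitaryGroup hV σ, ?_⟩
  rw [star_eq_conjTranspose, submatrix_mul_mul_conjTranspose_submatrix, ← star_eq_conjTranspose,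
    hVP, Equiv.coe_trans, ← submatrix_submatrix, submatrix_finSumEquivOfFinset_diagonal]
  rfl

end Unitary

section Norm

variable {𝕜 : Type*} [RCLike 𝕜] {l l' m n : Type*} [Fintype l] [Fintype l'] [Fintype m]
  [Fintype n] [DecidableEq l] [DecidableEq l'] [DecidableEq m] [DecidableEq n]

theorem l2_opNorm_le_one_of_mul_conjTranspose_eq_one {A : Matrix m n 𝕜} (h : A * Aᴴ = 1) :
    ‖A‖ ≤ 1 := by
  have hsq : ‖A‖ * ‖A‖ ≤ 1 := by
    rw [← l2_opNorm_conjTranspose A, ← l2_opNorm_conjTranspose_mul_self,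
      conjTranspose_conjTranspose, h]
    exact (IsStarProjection.one _).norm_le
  nlinarith [norm_nonneg A]

theorem l2_opNorm_one_submatrix_le_one {e : l → m} (he : Function.Injective e) :
    ‖(1 : Matrix m m 𝕜).submatrix e id‖ ≤ 1 := by
  refine l2_opNorm_le_one_of_mul_conjTranspose_eq_one ?_
  rw [conjTranspose_submatrix, conjTranspose_one]
  ext i j
  simp [mul_apply, one_apply, he.eq_iff]

theorem l2_opNorm_submatrix_le (A : Matrix m n 𝕜) {e : l → m} {f : l' → n}
    (he : Function.Injective e) (hf : Function.Injective f) : ‖A.submatrix e f‖ ≤ ‖A‖ := by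
  set E := (1 : Matrix m m 𝕜).submatrix e id
  set F := ((1 : Matrix n n 𝕜).submatrix f id)ᴴ
  have hfactor : A.submatrix e f = E * A * F := by
    ext i j
    simp [E, F, mul_apply, one_apply]
  have hE : ‖E‖ ≤ 1 := l2_opNorm_one_submatrix_le_one he
  have hF : ‖F‖ ≤ 1 := (l2_opNorm_conjTranspose _).trans_le (l2_opNorm_one_submatrix_le_one hf)
  calc ‖A.submatrix e f‖ ≤ ‖E‖ * ‖A‖ * ‖F‖ := by
        rw [hfactor]
        exact (l2_opNorm_mul _ _).trans (by gcongr; exact l2_opNorm_mul _ _)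
    _ ≤ 1 * ‖A‖ * 1 := by gcongr
    _ = ‖A‖ := by ring

end Norm

end Matrix

/-- A bounded idempotent matrix is unitarily equivalent to a block matrix `[[I, R], [0, 0]]`
with `‖R‖ ≤ k`, and hence is similar, via an invertible `X` with `‖X‖ ≤ 1 + k` and
`‖X⁻¹‖ ≤ 1 + k`, to a self-adjoint projection. Norms are `ℓ²`-operator norms. -/
theorem stmt10 (m : ℕ) (k : ℝ) (Q : Matrix (Fin m) (Fin m) ℂ)
    (hQ : Q * Q = Q) (hQk : ‖Q‖ ≤ k) :
    (∃ r : ℕ, ∃ hr : r ≤ m, ∃ U ∈ Matrix.unitaryGroup (Fin m) ℂ,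
      ∃ R : Matrix (Fin r) (Fin (m - r)) ℂ, ‖R‖ ≤ k ∧
        U * Q * star U =
          Matrix.reindex (finSumFinEquiv.trans (finCongr (by omega)))
            (finSumFinEquiv.trans (finCongr (by omega)))
            (Matrix.fromBlocks (1 : Matrix (Fin r) (Fin r) ℂ) R 0
              (0 : Matrix (Fin (m - r)) (Fin (m - r)) ℂ))) ∧
    (∃ X : (Matrix (Fin m) (Fin m) ℂ)ˣ,
      ‖(X : Matrix (Fin m) (Fin m) ℂ)‖ ≤ 1 + k ∧
      ‖(↑X⁻¹ : Matrix (Fin m) (Fin m) ℂ)‖ ≤ 1 + k ∧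
      ((X : Matrix (Fin m) (Fin m) ℂ) * Q * (↑X⁻¹ : Matrix (Fin m) (Fin m) ℂ)) *
          ((X : Matrix (Fin m) (Fin m) ℂ) * Q * (↑X⁻¹ : Matrix (Fin m) (Fin m) ℂ)) =
          (X : Matrix (Fin m) (Fin m) ℂ) * Q * (↑X⁻¹ : Matrix (Fin m) (Fin m) ℂ) ∧
      star ((X : Matrix (Fin m) (Fin m) ℂ) * Q * (↑X⁻¹ : Matrix (Fin m) (Fin m) ℂ)) =
          (X : Matrix (Fin m) (Fin m) ℂ) * Q * (↑X⁻¹ : Matrix (Fin m) (Fin m) ℂ)) := by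
  obtain ⟨P, hP, hPQ, hQP⟩ := Matrix.IsIdempotentElem.exists_isStarProjection_mul_eq hQ
  obtain ⟨r, hr, U, hU, hUP⟩ :=
    Matrix.IsStarProjection.exists_unitary_conj_eq_reindex_fromBlocks hP
  set e := finSumFinSubEquiv hr
  let φ := Unitary.conjStarAlgAut ℂ _ ⟨U, hU⟩
  have hφ (A : Matrix (Fin m) (Fin m) ℂ) : φ A = U * A * star U := rfl
  have hblock := Matrix.eq_reindex_fromBlocks_of_mul_reindex_fromBlocks_one_zero e (U * Q * star U)
    (by rw [← hUP, ← hφ, ← hφ, ← map_mul, hPQ]) (by rw [← hUP, ← hφ, ← hφ, ← map_mul, hQP])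
  have hnorm : ‖U * Q * star U‖ = ‖Q‖ := by
    rw [CStarRing.norm_mul_mem_unitary _ (Unitary.star_mem hU),
      CStarRing.norm_mem_unitary_mul _ hU]
  refine ⟨⟨r, hr, U, hU, _, ?_, hblock⟩, ?_⟩
  · exact (Matrix.l2_opNorm_submatrix_le _ (e.injective.comp Sum.inl_injective)
      (e.injective.comp Sum.inr_injective)).trans (hnorm.trans_le hQk)
  · obtain ⟨X, hX, hXinv, hXQ⟩ := hP.exists_unit_conj_eq_of_mul_eq hQ hPQ hQP
    refine ⟨X, hX.trans (by linarith), hXinv.trans (by linarith), ?_, ?_⟩ <;> rw [hXQ]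
    exacts [hP.isIdempotentElem, hP.isSelfAdjoint]
end
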